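/- arXiv:1407.8129 — 4 statements merged into one kernel-verified Lean document; each statement's English description precedes it below -/
import Mathlib

section
/- If G is a connected graph in which c ≥ p−1 (the longest cycle has order at least the longest path order minus one), then every longest cycle C of G is a dominating cycle, i.e., the vertex set V(G)\V(C) is an independent set. -/
/-!
Let `ab` be an edge off a longest cycle `C`. A path from `{a, b}` to `C` that meets `C` only at
its end `x` can be arranged to begin with the edge `ab`, so it has length at least `2`.
Continuing from `x` along `C` minus one of its edges at `x` gives a path on at least `c + 2`
vertices, contradicting `p ≤ c + 1`.
-/

open SimpleGraph

variable {V : Type*} [Fintype V] [DecidableEq V]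

/-- The order (number of vertices) of a longest path in `G`. -/
noncomputable def pathOrder (G : SimpleGraph V) : ℕ :=
  sSup {n | ∃ (u v : V) (w : G.Walk u v), w.IsPath ∧ n = w.length + 1}

/-- The order (number of vertices) of a longest cycle in `G`. -/
noncomputable def cycleOrder (G : SimpleGraph V) : ℕ :=
  sSup {n | ∃ (u : V) (w : G.Walk u u), w.IsCycle ∧ n = w.length}

/-- `G` is `k`-connected: more than `k` vertices and deleting any fewer than `k`
vertices leaves a connected graph. -/
def IsKConnected (G : SimpleGraph V) (k : ℕ) : Prop :=
  k < Fintype.card V ∧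
    ∀ S : Finset V, S.card < k → (G.induce {v | v ∉ S}).Connected

/-- The vertex connectivity of `G`. -/
noncomputable def connectivity (G : SimpleGraph V) : ℕ :=
  sSup {k | IsKConnected G k}

/-- The successor of `v` on the closed walk `w` (with the orientation of `w`). -/
def cycSucc {G : SimpleGraph V} {u : V} (w : G.Walk u u) (v : V) : V :=
  w.getVert (w.support.idxOf v + 1)

/-- The predecessor of `v` on the closed walk `w`. -/
def cycPred {G : SimpleGraph V} {u : V} (w : G.Walk u u) (v : V) : V :=
  cycSucc w.reverse v

/-- The predecessor of `v` on the path `w`, oriented from `x` to `y`. -/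
def pathPred {G : SimpleGraph V} {x y : V} (w : G.Walk x y) (v : V) : V :=
  w.getVert (w.support.idxOf v - 1)

namespace SimpleGraph

variable {V : Type*} {G : SimpleGraph V}

namespace Walk

lemma IsPath.length_add_one_le_pathOrder [Fintype V] {u v : V} {p : G.Walk u v}
    (hp : p.IsPath) : p.length + 1 ≤ pathOrder G :=
  le_csSup ⟨Fintype.card V, by rintro n ⟨_, _, q, hq, rfl⟩; exact hq.length_lt⟩ ⟨u, v, p, hp, rfl⟩

lemma IsPath.append_of_support_inter {u v w : V} {p : G.Walk u v} {q : G.Walk v w}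
    (hp : p.IsPath) (hq : q.IsPath) (hpq : ∀ y ∈ p.support, y ∈ q.support → y = v) :
    (p.append q).IsPath := by
  have hq' : (v :: q.support.tail).Nodup := q.cons_tail_support ▸ hq.support_nodup
  rw [isPath_def, support_append]
  refine hp.support_nodup.append (List.nodup_cons.mp hq').2 fun y hyp hyq => ?_
  obtain rfl := hpq y hyp (List.mem_of_mem_tail hyq)
  exact (List.nodup_cons.mp hq').1 hyq

variable [DecidableEq V]

lemma exists_isPath_meeting_set_only_at_end {u v : V} (p : G.Walk u v) (S : Set V)
    (hv : v ∈ S) : ∃ x ∈ S, ∃ q : G.Walk u x, q.IsPath ∧ ∀ y ∈ q.support, y ∈ S → y = x := by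
  induction p with
  | nil => exact ⟨_, hv, nil, .nil, by simp⟩
  | @cons u v w huv p ih =>
    by_cases hu : u ∈ S
    · exact ⟨u, hu, nil, .nil, by simp⟩
    obtain ⟨x, hx, q, hq, hqS⟩ := ih hv
    by_cases huq : u ∈ q.support
    · exact ⟨x, hx, q.dropUntil u huq, hq.dropUntil huq,
        fun y hy => hqS y (q.support_dropUntil_subset_support huq hy)⟩
    · refine ⟨x, hx, cons huv q, hq.cons huq, fun y hy hyS => ?_⟩
      rcases List.mem_cons.mp hy with rfl | hy
      · exact absurd hyS hu
      · exact hqS y hy hyS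

lemma IsPath.exists_isPath_two_le_length_of_adj {a b x : V} {q : G.Walk a x} (hq : q.IsPath)
    (hab : G.Adj a b) (hax : a ≠ x) (hbx : b ≠ x) :
    ∃ (z : V) (p : G.Walk z x), p.IsPath ∧ 2 ≤ p.length ∧
      ∀ y ∈ p.support, y = b ∨ y ∈ q.support := by
  by_cases hbq : b ∈ q.support
  · have ha : a ∉ (q.dropUntil b hbq).support := by
      intro ha
      rw [← q.take_spec hbq] at hq
      exact hq.ne_of_mem_support_of_append hab.ne (start_mem_support _) ha rfl
    have hlen : (q.dropUntil b hbq).length ≠ 0 := fun h => hbx (eq_of_length_eq_zero h)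
    refine ⟨a, cons hab (q.dropUntil b hbq), (hq.dropUntil hbq).cons ha, ?_, fun y hy => ?_⟩
    · simp only [length_cons]; omega
    · rcases List.mem_cons.mp hy with rfl | hy
      · exact .inr q.start_mem_support
      · exact .inr (q.support_dropUntil_subset_support hbq hy)
  · have hlen : q.length ≠ 0 := fun h => hax (eq_of_length_eq_zero h)
    refine ⟨b, cons hab.symm q, hq.cons hbq, ?_, fun y hy => ?_⟩
    · simp only [length_cons]; omega
    · rcases List.mem_cons.mp hy with rfl | hy
      · exact .inl rfl
      · exact .inr hy

lemma IsCycle.exists_isPath_length_add_one_eq {u x : V} {c : G.Walk u u} (hc : c.IsCycle)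
    (hx : x ∈ c.support) :
    ∃ (y : V) (p : G.Walk x y), p.IsPath ∧ p.length + 1 = c.length ∧
      ∀ v ∈ p.support, v ∈ c.support := by
  have hlen : (c.rotate x hx).length = c.length := by
    rw [rotate, length_append, add_comm, ← length_append, take_spec]
  have hrot := hc.rotate hx
  refine ⟨_, _, hrot.isPath_dropLast, ?_, fun v hv => ?_⟩
  · rw [length_dropLast_add_one hrot.not_nil, hlen]
  · rw [support_dropLast hrot.not_nil] at hv
    exact (mem_support_rotate_iff c x hx).mp (List.dropLast_subset _ hv)

lemma IsCycle.length_add_length_le_pathOrder [Fintype V] {u x z : V} {c : G.Walk u u}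
    (hc : c.IsCycle) (hx : x ∈ c.support) {p : G.Walk z x} (hp : p.IsPath)
    (hpc : ∀ y ∈ p.support, y ∈ c.support → y = x) :
    p.length + c.length ≤ pathOrder G := by
  obtain ⟨y, q, hq, hqlen, hqc⟩ := hc.exists_isPath_length_add_one_eq hx
  have := (hp.append_of_support_inter hq fun v hv hvq => hpc v hv (hqc v hvq))
    |>.length_add_one_le_pathOrder
  rw [length_append] at this
  omega

end Walk

end SimpleGraph

/-- If `G` is connected with `c ≥ p - 1`, then every longest cycle is dominating:
no two vertices off the cycle are adjacent. -/
theorem stmt7 (G : SimpleGraph V) (hconn : G.Connected)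
    (h : pathOrder G ≤ cycleOrder G + 1)
    {u : V} (w : G.Walk u u) (hw : w.IsCycle)
    (hlong : w.length = cycleOrder G)
    {a b : V} (ha : a ∉ w.support) (hb : b ∉ w.support) :
    ¬ G.Adj a b := by
  intro hab
  obtain ⟨x, hx, q, hq, hqw⟩ :=
    (hconn.preconnected a u).some.exists_isPath_meeting_set_only_at_end {v | v ∈ w.support}
      w.start_mem_support
  have hax : a ≠ x := by rintro rfl; exact ha hx
  have hbx : b ≠ x := by rintro rfl; exact hb hx
  obtain ⟨z, p, hp, hplen, hpq⟩ := hq.exists_isPath_two_le_length_of_adj hab hax hbx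
  have hpath := hw.length_add_length_le_pathOrder hx hp fun y hy hyw =>
    (hpq y hy).elim (fun hyb => absurd (hyb ▸ hyw) hb) (fun hyq => hqw y hyq hyw)
  omega
end

section
/- Let G be a graph, C a longest cycle in G with a fixed orientation, and x a vertex not on C with all neighbors on C. Then x is not adjacent to any vertex of N(x)^+, the set of successors on C of the neighbors of x; moreover, no two distinct vertices of N(x)^+ are adjacent to each other. -/
/-!
Cut the longest cycle `C` open at a neighbour `v` of `x`: what remains is a path from `v⁺` to `v`
through all of `C`, and `x` closes any path of that length between two of its neighbours into a
cycle longer than `C`. If `x ~ v⁺` this applies directly. If `v⁺ ~ v'⁺`, a Pósa rotation of that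
path (drop the edge `v'v'⁺`, add `v⁺v'⁺`) gives such a path from `v'` to `v`.
-/

open SimpleGraph

variable {V : Type*} [Fintype V] [DecidableEq V]

namespace SimpleGraph.Walk

variable {V : Type*} {G : SimpleGraph V}

lemma exists_mem_darts_fst_eq {a b c : V} {p : G.Walk a b} (hc : c ∈ p.support) (hcb : c ≠ b) :
    ∃ d ∈ p.darts, d.fst = c := by
  rw [← p.dropLast_support_concat, List.mem_append, List.mem_singleton] at hc
  simpa [← p.map_fst_darts] using hc.resolve_right hcb

lemma IsPath.exists_rotate {a b : V} {p : G.Walk a b} (hp : p.IsPath) {d : G.Dart}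
    (hd : d ∈ p.darts) (ha : G.Adj a d.snd) :
    ∃ q : G.Walk d.fst b, q.IsPath ∧ q.length = p.length ∧ q.support.Perm p.support := by
  obtain ⟨A, B, rfl⟩ := (isSubwalk_toWalk_adj_iff_mem_darts p).mpr hd
  have hperm : (A.reverse.append (cons ha B)).support.Perm
      ((A.append d.adj.toWalk).append B).support := by
    simpa [support_append] using List.reverse_perm A.support |>.append_right B.support
  refine ⟨A.reverse.append (cons ha B), .mk' (hperm.nodup_iff.mpr hp.support_nodup), ?_, hperm⟩
  simp [Adj.toWalk]
  omega

lemma IsPath.isCycle_cons_concat {a b x : V} {p : G.Walk a b} (hp : p.IsPath) (hab : a ≠ b)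
    (hx : x ∉ p.support) (ha : G.Adj x a) (hb : G.Adj b x) : (cons ha (p.concat hb)).IsCycle := by
  refine (cons_isCycle_iff _ ha).mpr ⟨hp.concat hx hb, fun he => ?_⟩
  rw [edges_concat, List.concat_eq_append, List.mem_append, List.mem_singleton] at he
  rcases he with he | he
  · exact hx (p.fst_mem_support_of_mem_edges he)
  · exact hab (by simp_all)

variable [DecidableEq V]

lemma IsCycle.snd_eq_cycSucc {u : V} {w : G.Walk u u} (hw : w.IsCycle) {d : G.Dart}
    (hd : d ∈ w.darts) : d.snd = cycSucc w d.fst := by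
  set i := w.darts.idxOf d
  have hi : i < w.darts.length := List.idxOf_lt_length_of_mem hd
  have hdi : w.darts[i] = d := List.getElem_idxOf hi
  have hfst : d.fst = w.support.dropLast[i]'(by simpa using hi) := by
    rw [← hdi, fst_darts_getElem]
  have hidx : w.support.idxOf d.fst = i := by
    rw [← w.dropLast_support_concat, List.idxOf_append_of_mem (hfst ▸ List.getElem_mem _), hfst,
      hw.nodup_dropLast_support.idxOf_getElem]
  rw [cycSucc, hidx, ← hdi, darts_getElem_eq_getVert]

lemma IsCycle.exists_isPath_cycSucc {u v : V} {w : G.Walk u u} (hw : w.IsCycle)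
    (hv : v ∈ w.support) :
    ∃ t : G.Walk (cycSucc w v) v, t.IsPath ∧ t.length + 1 = w.length ∧
      (∀ y, y ∈ t.support ↔ y ∈ w.support) ∧ ∀ d ∈ t.darts, d.snd = cycSucc w d.fst := by
  obtain ⟨s, hs, t, ht⟩ := not_nil_iff.mp (hw.rotate hv).not_nil
  have hdarts : ∀ d ∈ (w.rotate v hv).darts, d ∈ w.darts :=
    fun d => (rotate_darts w v hv).mem_iff.mp
  obtain rfl : s = cycSucc w v := hw.snd_eq_cycSucc (d := ⟨(v, s), hs⟩) (hdarts _ (by simp [ht]))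
  have hcyc := hw.rotate hv
  rw [ht, cons_isCycle_iff] at hcyc
  refine ⟨t, hcyc.1, ?_, fun y => ?_, fun d hd => hw.snd_eq_cycSucc (hdarts d (by simp [ht, hd]))⟩
  · simpa [ht] using length_rotate w v hv
  · rw [← mem_support_rotate_iff w v hv, ht, support_cons, List.mem_cons]
    exact (or_iff_right_of_imp fun h => h ▸ t.end_mem_support).symm

end SimpleGraph.Walk

/-- Hopping lemma: if `C` is a longest cycle, `x ∉ V(C)` with `N(x) ⊆ V(C)`,
then `{x} ∪ N(x)⁺` is an independent set. -/
theorem stmt8 (G : SimpleGraph V) {u : V} (w : G.Walk u u) (hw : w.IsCycle)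
    (hmax : ∀ (v : V) (w' : G.Walk v v), w'.IsCycle → w'.length ≤ w.length)
    {x : V} (hx : x ∉ w.support) (hnbr : ∀ y, G.Adj x y → y ∈ w.support) :
    (∀ v, G.Adj x v → ¬ G.Adj x (cycSucc w v)) ∧
    (∀ v v', G.Adj x v → G.Adj x v' → cycSucc w v ≠ cycSucc w v' →
      ¬ G.Adj (cycSucc w v) (cycSucc w v')) := by
  have no_long_path {a b : V} (p : G.Walk a b) (hp : p.IsPath) (hlen : p.length + 1 = w.length)
      (hxp : x ∉ p.support) (ha : G.Adj x a) (hb : G.Adj x b) : False := by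
    have hab : a ≠ b := hp.nil_iff_eq.not.mp <| Walk.not_nil_iff_lt_length.mpr <| by
      have := hw.three_le_length; omega
    have := hmax x _ (hp.isCycle_cons_concat hab hxp ha hb.symm)
    simp only [Walk.length_cons, Walk.length_concat] at this
    omega
  refine ⟨fun v hv hxv' => ?_, fun v v' hv hv' hne hadj => ?_⟩
  · obtain ⟨t, ht, hlen, hsupp, -⟩ := hw.exists_isPath_cycSucc (hnbr v hv)
    exact no_long_path t ht hlen (fun h => hx ((hsupp x).mp h)) hxv' hv
  · obtain ⟨t, ht, hlen, hsupp, hsucc⟩ := hw.exists_isPath_cycSucc (hnbr v hv)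
    have hv'v : v' ≠ v := by rintro rfl; exact hne rfl
    obtain ⟨d, hd, rfl⟩ := Walk.exists_mem_darts_fst_eq ((hsupp v').mpr (hnbr v' hv')) hv'v
    rw [← hsucc d hd] at hadj
    obtain ⟨q, hq, hqlen, hqt⟩ := ht.exists_rotate hd hadj
    exact no_long_path q hq (hqlen ▸ hlen) (fun h => hx ((hsupp x).mp (hqt.mem_iff.mp h))) hv' hv
end

section
/- Let G be a graph and P a longest path in G with endpoints x and y where x and y are nonadjacent. If there exists a vertex z on P that is adjacent to x and whose predecessor on P (oriented from x to y) is adjacent to y, then G contains a cycle whose vertex set equals V(P). -/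
/-!
Split `P` at `z` into `x ⋯ z⁻` and `z ⋯ y`. The chords `xz` and `yz⁻` close the walk
`x, z ⋯ y, z⁻ ⋯ x`, which visits every vertex of `P` exactly once; it is a cycle, not a walk
back and forth along one edge, because `z ≠ y` (`x` and `y` are nonadjacent).
-/

open SimpleGraph

variable {V : Type*} [Fintype V] [DecidableEq V]

namespace SimpleGraph.Walk

variable {α : Type*} {G : SimpleGraph α}

lemma pathPred_eq_penultimate_takeUntil [DecidableEq α] {x y z : α} (P : G.Walk x y)
    (hz : z ∈ P.support) : pathPred P z = (P.takeUntil z hz).penultimate := by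
  rw [pathPred, ← length_takeUntil P hz, penultimate, getVert_takeUntil hz (Nat.sub_le _ _)]

variable {x y z w : α}

lemma support_concat_append (Q : G.Walk x w) (hwz : G.Adj w z) (D : G.Walk z y) :
    ((Q.concat hwz).append D).support = Q.support ++ D.support := by
  rw [support_append, support_concat, List.append_assoc, List.singleton_append,
    D.cons_tail_support]

def crossingCycle (Q : G.Walk x w) (D : G.Walk z y) (hxz : G.Adj x z) (hyw : G.Adj y w) :
    G.Walk x x :=
  cons hxz (D.append (cons hyw Q.reverse))

lemma support_crossingCycle (Q : G.Walk x w) (D : G.Walk z y) (hxz : G.Adj x z)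
    (hyw : G.Adj y w) :
    (Q.crossingCycle D hxz hyw).support = x :: (D.support ++ Q.support.reverse) := by
  rw [crossingCycle, support_cons, support_append, support_cons, List.tail_cons,
    support_reverse]

lemma mem_support_crossingCycle_iff {Q : G.Walk x w} (hwz : G.Adj w z) {D : G.Walk z y}
    (hxz : G.Adj x z) (hyw : G.Adj y w) {a : α} :
    a ∈ (Q.crossingCycle D hxz hyw).support ↔ a ∈ ((Q.concat hwz).append D).support := by
  rw [support_crossingCycle, support_concat_append]
  have := Q.start_mem_support
  grind

lemma isCycle_crossingCycle {Q : G.Walk x w} {hwz : G.Adj w z} {D : G.Walk z y}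
    (hP : ((Q.concat hwz).append D).IsPath) (hzy : z ≠ y) (hxz : G.Adj x z) (hyw : G.Adj y w) :
    (Q.crossingCycle D hxz hyw).IsCycle := by
  have hnd := hP.support_nodup
  rw [support_concat_append, List.nodup_append] at hnd
  obtain ⟨hQ, hD, hQD⟩ := hnd
  have hxD : x ∉ D.support := fun h ↦ hQD x Q.start_mem_support x h rfl
  have hzQ : z ∉ Q.support := fun h ↦ hQD z h z D.start_mem_support rfl
  rw [crossingCycle, cons_isCycle_iff, isPath_def, support_append, support_cons, List.tail_cons,
    support_reverse]
  refine ⟨List.nodup_append.mpr ⟨hD, List.nodup_reverse.mpr hQ, ?_⟩, ?_⟩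
  · simpa using fun a ha b hb ↦ (hQD b hb a ha).symm
  · rw [edges_append, edges_cons, List.mem_append, List.mem_cons, edges_reverse, List.mem_reverse]
    rintro (h | h | h)
    · exact hxD (D.fst_mem_support_of_mem_edges h)
    · rcases Sym2.eq_iff.mp h with ⟨rfl, -⟩ | ⟨-, rfl⟩
      · exact hxD D.end_mem_support
      · exact hzy rfl
    · exact hzQ (Q.snd_mem_support_of_mem_edges h)

end SimpleGraph.Walk

open SimpleGraph.Walk in
theorem stmt10_general (G : SimpleGraph V) {x y : V} (P : G.Walk x y) (hP : P.IsPath)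
    (hxy : ¬ G.Adj x y)
    {z : V} (hz : z ∈ P.support)
    (h1 : G.Adj x z) (h2 : G.Adj y (pathPred P z)) :
    ∃ (u : V) (w : G.Walk u u), w.IsCycle ∧
      ∀ a, a ∈ w.support ↔ a ∈ P.support := by
  have hzy : z ≠ y := by
    rintro rfl
    exact hxy h1
  set Q := P.takeUntil z hz
  have hQ : ¬ Q.Nil := by simpa [Q] using h1.ne
  have hPQ : (Q.dropLast.concat (adj_penultimate hQ)).append (P.dropUntil z hz) = P := by
    rw [concat_dropLast, take_spec]
  rw [pathPred_eq_penultimate_takeUntil P hz] at h2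
  refine ⟨x, Q.dropLast.crossingCycle (P.dropUntil z hz) h1 h2, ?_, fun a ↦ ?_⟩
  · exact isCycle_crossingCycle (hPQ ▸ hP) hzy h1 h2
  · rw [mem_support_crossingCycle_iff (adj_penultimate hQ), hPQ]

/-- Crossing-chords rotation: if `P` is a longest path from `x` to `y` with
`x, y` nonadjacent, and some `z` on `P` satisfies `x ~ z` and `y ~ z⁻`, then `G`
has a cycle through exactly the vertices of `P`. -/
theorem stmt10 (G : SimpleGraph V) {x y : V} (P : G.Walk x y) (hP : P.IsPath)
    (hmax : ∀ (a b : V) (Q : G.Walk a b), Q.IsPath → Q.length ≤ P.length)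
    (hxy : ¬ G.Adj x y)
    {z : V} (hz : z ∈ P.support) (hzx : z ≠ x)
    (h1 : G.Adj x z) (h2 : G.Adj y (pathPred P z)) :
    ∃ (u : V) (w : G.Walk u u), w.IsCycle ∧
      ∀ a, a ∈ w.support ↔ a ∈ P.support :=
  stmt10_general G P hP hxy hz h1 h2
end

section
/- Let G be a graph, C a longest cycle with an orientation, and z a vertex not on C with all neighbors on C. Then N(z) and N^+(z) are disjoint, and hence the order of C is at least 2·d(z). -/
open SimpleGraph

variable {V : Type*} [Fintype V] [DecidableEq V]

/-! If two neighbours `a`, `b` of `z` satisfied `a = b⁺`, replacing the edge `b b⁺` of `C` by the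
path `b z b⁺` would give a longer cycle. Hence `N(z)` and `N⁺(z)` are disjoint subsets of `V(C)`,
and since the successor map is injective on `V(C)` both have `d(z)` elements. -/

lemma Finset.two_mul_card_le_of_mapsTo {α : Type*} {s t : Finset α} {f : α → α} (hs : s ⊆ t)
    (hf : Set.MapsTo f s t) (hinj : Set.InjOn f s) (hd : ∀ x ∈ s, f x ∉ s) :
    2 * s.card ≤ t.card := by
  classical
  have hdisj : Disjoint s (s.image f) := Finset.disjoint_left.2 fun x hx hfx ↦ by
    obtain ⟨y, hy, rfl⟩ := Finset.mem_image.1 hfx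
    exact hd y hy hx
  calc 2 * s.card = s.card + (s.image f).card := by rw [card_image_of_injOn hinj]; ring
    _ = (s ∪ s.image f).card := (card_union_of_disjoint hdisj).symm
    _ ≤ t.card := card_le_card (union_subset hs (image_subset_iff.2 hf))

namespace SimpleGraph.Walk

variable {V : Type*} {G : SimpleGraph V} {u v z : V}

lemma IsCycle.isCycle_cons_cons_tail {c : G.Walk u u} (hc : c.IsCycle) (hz : z ∉ c.support)
    (huz : G.Adj u z) (hzs : G.Adj z c.snd) : (cons huz (cons hzs c.tail)).IsCycle := by
  have hz' : z ∉ c.tail.support := by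
    rw [c.support_tail_of_not_nil hc.not_nil]
    exact fun h ↦ hz (List.mem_of_mem_tail h)
  rw [cons_isCycle_iff]
  refine ⟨hc.isPath_tail.cons hz', fun he ↦ ?_⟩
  rcases List.mem_cons.1 (edges_cons _ _ ▸ he) with he | he
  · rcases Sym2.eq_iff.1 he with ⟨rfl, -⟩ | ⟨hu, -⟩
    · exact hz c.start_mem_support
    · exact (c.adj_snd hc.not_nil).ne hu
  · exact hz' (c.tail.snd_mem_support_of_mem_edges he)

variable [DecidableEq V]

lemma IsCycle.card_toFinset_support {c : G.Walk u u} (hc : c.IsCycle) :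
    c.support.toFinset.card = c.length := by
  have hu : u ∈ c.support.tail := c.end_mem_tail_support hc.not_nil
  rw [← c.cons_tail_support, List.toFinset_cons, Finset.insert_eq_of_mem (List.mem_toFinset.2 hu),
    List.toFinset_card_of_nodup hc.support_nodup, List.length_tail, length_support]
  rfl

lemma idxOf_lt_length_of_not_nil {c : G.Walk u u} (hc : ¬c.Nil) (hv : v ∈ c.support) :
    c.support.idxOf v < c.length := by
  have hle : c.support.idxOf v ≤ c.length := by
    have := List.idxOf_lt_length_of_mem hv
    rw [length_support] at this
    omega
  refine hle.lt_of_ne fun heq ↦ hc ?_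
  have hvu : v = u := by rw [← c.getVert_support_idxOf hv, heq, getVert_length]
  subst hvu
  rw [← c.cons_tail_support, List.idxOf_cons_self] at heq
  exact length_eq_zero_iff.1 heq.symm

lemma snd_rotate {c : G.Walk u u} (hc : ¬c.Nil) (hv : v ∈ c.support) :
    (c.rotate v hv).snd = cycSucc c v := by
  have hlt := idxOf_lt_length_of_not_nil hc hv
  rw [rotate, snd, getVert_append, length_dropUntil, dropUntil_eq_drop, cycSucc]
  split_ifs with h
  · simp [drop_getVert]
  · rw [show c.support.idxOf v + 1 = c.length by omega, getVert_length,
      show 1 - (c.length - c.support.idxOf v) = 0 by omega, getVert_zero]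

lemma IsCycle.injOn_cycSucc {c : G.Walk u u} (hc : c.IsCycle) :
    Set.InjOn (cycSucc c) {v | v ∈ c.support} := by
  intro a ha b hb hab
  have hia := idxOf_lt_length_of_not_nil hc.not_nil ha
  have hib := idxOf_lt_length_of_not_nil hc.not_nil hb
  have := hc.getVert_injOn (by simp only [Set.mem_ofPred_eq]; omega)
    (by simp only [Set.mem_ofPred_eq]; omega) hab
  rw [← c.getVert_support_idxOf ha, ← c.getVert_support_idxOf hb]
  congr 1
  omega

theorem IsCycle.not_adj_cycSucc_of_isLongest {c : G.Walk u u} (hc : c.IsCycle)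
    (hmax : ∀ (v : V) (c' : G.Walk v v), c'.IsCycle → c'.length ≤ c.length)
    (hz : z ∉ c.support) {b : V} (hb : G.Adj z b) (hbc : b ∈ c.support) :
    ¬G.Adj z (cycSucc c b) := by
  intro ha
  rw [← snd_rotate hc.not_nil hbc] at ha
  have hc' := hc.rotate hbc
  have := hmax _ _ (hc'.isCycle_cons_cons_tail (by simpa using hz) hb.symm ha)
  rw [length_cons, length_cons, length_tail_add_one hc'.not_nil, length_rotate] at this
  omega

end SimpleGraph.Walk

/-- For a longest cycle `C` and `z ∉ V(C)` with `N(z) ⊆ V(C)`, the sets `N(z)`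
and `N(z)⁺` are disjoint, hence `|C| ≥ 2 d(z)`. -/
theorem stmt13 (G : SimpleGraph V) [DecidableRel G.Adj]
    {u : V} (w : G.Walk u u) (hw : w.IsCycle)
    (hmax : ∀ (v : V) (w' : G.Walk v v), w'.IsCycle → w'.length ≤ w.length)
    {z : V} (hz : z ∉ w.support) (hnbr : ∀ v, G.Adj z v → v ∈ w.support) :
    (∀ a b, G.Adj z a → G.Adj z b → a ≠ cycSucc w b) ∧
    2 * G.degree z ≤ w.length := by
  have not_adj_succ b (hb : G.Adj z b) := hw.not_adj_cycSucc_of_isLongest hmax hz hb (hnbr b hb)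
  refine ⟨fun a b ha hb hab ↦ not_adj_succ b hb (hab ▸ ha), ?_⟩
  rw [← card_neighborFinset_eq_degree, ← hw.card_toFinset_support]
  refine Finset.two_mul_card_le_of_mapsTo (fun v hv ↦ ?_) (fun v hv ↦ ?_)
    (hw.injOn_cycSucc.mono fun v hv ↦ ?_) (fun v hv hs ↦ ?_)
  · exact List.mem_toFinset.2 (hnbr v ((mem_neighborFinset G z v).1 hv))
  · exact List.mem_toFinset.2 (w.getVert_mem_support _)
  · exact hnbr v ((mem_neighborFinset G z v).1 hv)
  · exact not_adj_succ v ((mem_neighborFinset G z v).1 hv) ((mem_neighborFinset G z _).1 hs)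
end
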